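/- Let a, b be unit vectors in ℝ³ and let η_a, α_a, η_b, α_b be real numbers. For the two-qubit triplet state ψ = (e₊⊗e₋ + e₋⊗e₊)/√2, the correlation function Ẽ(a, b) = ⟨ψ, ((M^A₊(a) − M^A₋(a)) ⊗ (M^B₊(b) − M^B₋(b))) ψ⟩ equals η_a·η_b + α_a·α_b·(a_x b_x + a_y b_y − a_z b_z), where M^A_±(a) = ((1±η_a)I ± α_a σ·a)/2 and M^B_±(b) = ((1±η_b)I ± α_b σ·b)/2. Equivalently, writing 𝑎̸ := (a_x, a_y, −a_z) for the reflection of a through the xy-plane, Ẽ(𝑎̸, b) = η_a·η_b + α_a·α_b·(a·b). -/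

import Mathlib

open scoped Matrix Kronecker RealInnerProductSpace

noncomputable section

/-- The Pauli matrix σx. -/
def σx : Matrix (Fin 2) (Fin 2) ℂ := !![0, 1; 1, 0]

/-- The Pauli matrix σy. -/
def σy : Matrix (Fin 2) (Fin 2) ℂ := !![0, -Complex.I; Complex.I, 0]

/-- The Pauli matrix σz. -/
def σz : Matrix (Fin 2) (Fin 2) ℂ := !![1, 0; 0, -1]

/-- σ·v for v ∈ ℝ³. -/
def pauliDot (v : EuclideanSpace ℝ (Fin 3)) : Matrix (Fin 2) (Fin 2) ℂ :=
  (v 0 : ℂ) • σx + (v 1 : ℂ) • σy + (v 2 : ℂ) • σz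

/-- The biased unsharp POVM element M₊(n) = ((1+η)·I + α·(σ·n))/2. -/
def Mplus (η α : ℝ) (n : EuclideanSpace ℝ (Fin 3)) : Matrix (Fin 2) (Fin 2) ℂ :=
  (1/2 : ℂ) • (((1 + η : ℝ) : ℂ) • (1 : Matrix (Fin 2) (Fin 2) ℂ) + (α : ℂ) • pauliDot n)

/-- The biased unsharp POVM element M₋(n) = ((1−η)·I − α·(σ·n))/2. -/
def Mminus (η α : ℝ) (n : EuclideanSpace ℝ (Fin 3)) : Matrix (Fin 2) (Fin 2) ℂ :=
  (1/2 : ℂ) • (((1 - η : ℝ) : ℂ) • (1 : Matrix (Fin 2) (Fin 2) ℂ) - (α : ℂ) • pauliDot n)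

/-- The two-qubit spin-triplet state with zero z-component, (e₊⊗e₋ + e₋⊗e₊)/√2 ∈ ℂ²⊗ℂ². -/
def triplet : Fin 2 × Fin 2 → ℂ := fun p =>
  if p = (0, 1) then ((Real.sqrt 2 : ℝ)⁻¹ : ℂ)
  else if p = (1, 0) then ((Real.sqrt 2 : ℝ)⁻¹ : ℂ)
  else 0

/-- The reflection 𝑎̸ = (a_x, a_y, −a_z) of a vector a ∈ ℝ³ through the xy-plane. -/
def slash (a : EuclideanSpace ℝ (Fin 3)) : EuclideanSpace ℝ (Fin 3) :=
  (WithLp.equiv 2 (Fin 3 → ℝ)).symm ![a 0, a 1, -(a 2)]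


/-! The difference M₊ − M₋ is the observable η I + α σ·n. In the triplet state the expectation of
A ⊗ B only pairs the entries of A and B across the two basis vectors e₊⊗e₋ and e₋⊗e₊, which gives
`(A₀₀B₁₁ + A₀₁B₁₀ + A₁₀B₀₁ + A₁₁B₀₀)/2`. For the two observables this is
ηₐη_b + αₐα_b(xₓyₓ + x_y y_y − x_z y_z): the σy⊗σy term enters with sign −i² = +1 and σz⊗σz with
sign −1. Reflecting the first vector through the xy-plane turns the twisted product into ⟪a, b⟫. -/

lemma pauliDot_eq (v : EuclideanSpace ℝ (Fin 3)) :
    pauliDot v = !![(v 2 : ℂ), v 0 - Complex.I * v 1; v 0 + Complex.I * v 1, -(v 2 : ℂ)] := by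
  ext i j
  fin_cases i <;> fin_cases j <;> simp [pauliDot, σx, σy, σz] <;> ring

lemma Mplus_sub_Mminus (η α : ℝ) (n : EuclideanSpace ℝ (Fin 3)) :
    Mplus η α n - Mminus η α n = (η : ℂ) • 1 + (α : ℂ) • pauliDot n := by
  simp only [Mplus, Mminus]
  push_cast
  module

lemma triplet_kronecker_expectation (A B : Matrix (Fin 2) (Fin 2) ℂ) :
    star triplet ⬝ᵥ ((A ⊗ₖ B) *ᵥ triplet) =
      (A 0 0 * B 1 1 + A 0 1 * B 1 0 + A 1 0 * B 0 1 + A 1 1 * B 0 0) / 2 := by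
  have hsq : ((Real.sqrt 2 : ℝ) : ℂ)⁻¹ * ((Real.sqrt 2 : ℝ) : ℂ)⁻¹ = 1 / 2 := by
    rw [← mul_inv, ← Complex.ofReal_mul, Real.mul_self_sqrt zero_le_two]
    norm_num
  simp only [dotProduct, Matrix.mulVec, Fintype.sum_prod_type, Fin.sum_univ_two, triplet,
    Matrix.kroneckerMap_apply, Pi.star_apply, RCLike.star_def, map_inv₀, Complex.conj_ofReal,
    Prod.mk.injEq, mul_ite, mul_zero, map_zero, zero_mul, add_zero, zero_add, and_true, and_false,
    zero_ne_one, one_ne_zero, if_true, if_false]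
  linear_combination (A 0 0 * B 1 1 + A 0 1 * B 1 0 + A 1 0 * B 0 1 + A 1 1 * B 0 0) * hsq

lemma triplet_correlation (x y : EuclideanSpace ℝ (Fin 3)) (ηa αa ηb αb : ℝ) :
    star triplet ⬝ᵥ
        (((Mplus ηa αa x - Mminus ηa αa x) ⊗ₖ (Mplus ηb αb y - Mminus ηb αb y)) *ᵥ triplet)
      = ((ηa * ηb + αa * αb * (x 0 * y 0 + x 1 * y 1 - x 2 * y 2) : ℝ) : ℂ) := by
  rw [triplet_kronecker_expectation, Mplus_sub_Mminus, Mplus_sub_Mminus, pauliDot_eq, pauliDot_eq]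
  simp only [Matrix.add_apply, Matrix.smul_apply, Matrix.one_apply, Matrix.of_apply,
    Matrix.cons_val', Matrix.cons_val_zero, Matrix.cons_val_one, Matrix.cons_val_fin_one,
    smul_eq_mul, Complex.ofReal_add, Complex.ofReal_mul, Complex.ofReal_sub, if_pos, if_neg,
    zero_ne_one, one_ne_zero, not_false_eq_true, mul_one, mul_zero]
  linear_combination (-(αa * αb * x 1 * y 1 : ℂ)) * Complex.I_sq

lemma slash_mul_add_mul_sub_mul (a b : EuclideanSpace ℝ (Fin 3)) :
    slash a 0 * b 0 + slash a 1 * b 1 - slash a 2 * b 2 = ⟪a, b⟫ := by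
  simp only [slash, WithLp.equiv_symm_apply, Matrix.cons_val_zero, Matrix.cons_val_one,
    Matrix.cons_val, PiLp.inner_apply, RCLike.inner_apply, Real.ringHom_apply, Fin.sum_univ_three]
  ring

theorem stmt_17_general (a b : EuclideanSpace ℝ (Fin 3))
    (ηa αa ηb αb : ℝ) :
    star triplet ⬝ᵥ
        (((Mplus ηa αa a - Mminus ηa αa a) ⊗ₖ (Mplus ηb αb b - Mminus ηb αb b)) *ᵥ triplet)
      = ((ηa * ηb + αa * αb * (a 0 * b 0 + a 1 * b 1 - a 2 * b 2) : ℝ) : ℂ) ∧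
    star triplet ⬝ᵥ
        (((Mplus ηa αa (slash a) - Mminus ηa αa (slash a)) ⊗ₖ
            (Mplus ηb αb b - Mminus ηb αb b)) *ᵥ triplet)
      = ((ηa * ηb + αa * αb * ⟪a, b⟫ : ℝ) : ℂ) :=
  ⟨triplet_correlation a b ηa αa ηb αb, by
    rw [triplet_correlation, slash_mul_add_mul_sub_mul]⟩

theorem stmt_17 (a b : EuclideanSpace ℝ (Fin 3)) (ha : ‖a‖ = 1) (hb : ‖b‖ = 1)
    (ηa αa ηb αb : ℝ) :
    star triplet ⬝ᵥ
        (((Mplus ηa αa a - Mminus ηa αa a) ⊗ₖ (Mplus ηb αb b - Mminus ηb αb b)) *ᵥ triplet)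
      = ((ηa * ηb + αa * αb * (a 0 * b 0 + a 1 * b 1 - a 2 * b 2) : ℝ) : ℂ) ∧
    star triplet ⬝ᵥ
        (((Mplus ηa αa (slash a) - Mminus ηa αa (slash a)) ⊗ₖ
            (Mplus ηb αb b - Mminus ηb αb b)) *ᵥ triplet)
      = ((ηa * ηb + αa * αb * ⟪a, b⟫ : ℝ) : ℂ) :=
  stmt_17_general a b ηa αa ηb αb

end
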